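/- For power series over ℤ with constant term 1, the unique exponents in the decomposition of the partition generating function are all 1: ∏_{k≥1} (1-t^k)^{-1} is its own decomposition, and hence for any m ∈ ℤ, applying the power structure over ℤ gives (1 + ∑_{n≥1} p(n)tⁿ)^m = ∏_{k≥1}(1-t^k)^{-m}, which for m = -1 yields Euler's pentagonal-type identity (1 + ∑ p(n)tⁿ)^{-1} = ∏_{k≥1}(1-t^k). -/

import Mathlib

/-!
Sorting the parts of a partition by size gives `∑ p(n) tⁿ = ∏_{k ≥ 1} (1 - t^k)⁻¹`
(`Nat.Partition.hasProd_genFun`). Since the `k`-th factor of `infProd` is `≡ 1 mod t^k`, the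
`n`-th coefficient of `infProd f` is that of any finite product containing the factors `k ≤ n`;
hence `infProd` is multiplicative and `A ↦ ∏_k A(t^k)` commutes with products and powers.
Euler's identity is `(1 - t) (1 - t)⁻¹ = 1` substituted factorwise, and the `m`-th power of the
partition series is the product of the `m`-th powers of its factors.
-/

/-- Substitution `t ↦ t^k` in a formal power series. -/
noncomputable def substPow {R : Type*} [CommRing R] (k : ℕ) (A : PowerSeries R) :
    PowerSeries R :=
  PowerSeries.mk fun n => if k ∣ n then PowerSeries.coeff (n / k) A else 0

/-- The infinite product `∏_{i ≥ 1} f i`, well defined (coefficientwise) whenever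
`f i ≡ 1 mod t^i`. -/
noncomputable def infProd {R : Type*} [CommRing R] (f : ℕ → PowerSeries R) : PowerSeries R :=
  PowerSeries.mk fun n => PowerSeries.coeff n (∏ i ∈ Finset.Icc 1 n, f i)

/-- The power structure: given the family `E a = (1-t)^{-a}` and the exponents `a i` of the
unique decomposition `A(t) = ∏_{i≥1} (1-t^i)^{-a_i}`, the series
`A(t)^m := ∏_{i≥1} (1-t^i)^{-a_i m}`. -/
noncomputable def psPow {R : Type*} [CommRing R] (E : R → PowerSeries R) (a : ℕ → R)
    (m : R) : PowerSeries R :=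
  infProd fun i => substPow i (E (a i * m))

/-- `B^n` for an integer `n`, negative exponents via the inverse of `B`. -/
noncomputable def zp {R : Type*} [CommRing R] (B : PowerSeries R) (n : ℤ) : PowerSeries R :=
  B ^ n.toNat * (PowerSeries.invOfUnit B 1) ^ (-n).toNat

/-- The geometric series `(1-t)^{-1} = 1 + t + t² + ⋯` over `ℤ`. -/
noncomputable def geomZ : PowerSeries ℤ := PowerSeries.mk fun _ => (1 : ℤ)

/-- The partition generating function `1 + ∑_{n≥1} p(n) tⁿ`. -/
noncomputable def partGen : PowerSeries ℤ :=
  PowerSeries.mk fun n => (Fintype.card (Nat.Partition n) : ℤ)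

open PowerSeries Finset
open scoped PowerSeries.WithPiTopology

section substPow

variable {R : Type*} [CommRing R]

lemma coeff_substPow (k n : ℕ) (A : R⟦X⟧) :
    coeff n (substPow k A) = if k ∣ n then coeff (n / k) A else 0 :=
  coeff_mk _ _

lemma substPow_zero (A : R⟦X⟧) : substPow 0 A = C (constantCoeff A) := by
  ext n
  rcases eq_or_ne n 0 with rfl | hn <;> simp [coeff_substPow, coeff_C, *]

lemma substPow_eq_expand {k : ℕ} (hk : k ≠ 0) (A : R⟦X⟧) :
    substPow k A = expand k hk A := by
  ext n
  rw [coeff_substPow, coeff_expand]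

lemma substPow_one (k : ℕ) : substPow k (1 : R⟦X⟧) = 1 := by
  rcases eq_or_ne k 0 with rfl | hk
  · simp [substPow_zero]
  · rw [substPow_eq_expand hk, map_one]

lemma substPow_mul (k : ℕ) (A B : R⟦X⟧) :
    substPow k (A * B) = substPow k A * substPow k B := by
  rcases eq_or_ne k 0 with rfl | hk
  · simp [substPow_zero]
  · simp [substPow_eq_expand hk]

lemma substPow_pow (k : ℕ) (A : R⟦X⟧) (a : ℕ) : substPow k (A ^ a) = substPow k A ^ a := by
  induction a with
  | zero => rw [pow_zero, pow_zero, substPow_one]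
  | succ a ih => rw [pow_succ, substPow_mul, ih, pow_succ]

lemma substPow_one_sub_X {k : ℕ} (hk : k ≠ 0) : substPow k (1 - X : R⟦X⟧) = 1 - X ^ k := by
  simp [substPow_eq_expand hk]

lemma X_pow_dvd_substPow_sub_one (k : ℕ) {A : R⟦X⟧} (hA : constantCoeff A = 1) :
    X ^ k ∣ substPow k A - 1 := by
  refine X_pow_dvd_iff.mpr fun m hm => ?_
  rcases eq_or_ne m 0 with rfl | hm0
  · rw [map_sub, coeff_substPow, if_pos (dvd_zero k), Nat.zero_div, coeff_zero_eq_constantCoeff,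
      hA]
    simp
  · have : ¬ k ∣ m := fun h => (Nat.le_of_dvd (Nat.pos_of_ne_zero hm0) h).not_gt hm
    simp [coeff_substPow, this, coeff_one, hm0]

end substPow

section infProd

variable {R : Type*} [CommRing R]

lemma coeff_mul_eq_of_X_pow_dvd_sub_one {n : ℕ} (A : R⟦X⟧) {B : R⟦X⟧}
    (hB : X ^ (n + 1) ∣ B - 1) : coeff n (A * B) = coeff n A := by
  obtain ⟨D, hD⟩ := hB
  rw [show A * B = A + X ^ (n + 1) * (A * D) by linear_combination A * hD, map_add,
    coeff_X_pow_mul', if_neg (by omega), add_zero]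

lemma X_pow_dvd_prod_sub_one {ι : Type*} {n : ℕ} {s : Finset ι} {f : ι → R⟦X⟧}
    (hf : ∀ i ∈ s, X ^ n ∣ f i - 1) : X ^ n ∣ ∏ i ∈ s, f i - 1 := by
  refine prod_induction f (fun g => X ^ n ∣ g - 1) (fun g h hg hh => ?_) (by simp) hf
  rw [show g * h - 1 = (g - 1) * h + (h - 1) by ring]
  exact dvd_add (dvd_mul_of_dvd_left hg h) hh

lemma coeff_prod_eq_of_subset {ι : Type*} [DecidableEq ι] {n : ℕ} {s t : Finset ι}
    {f : ι → R⟦X⟧} (hst : s ⊆ t) (hf : ∀ i ∈ t \ s, X ^ (n + 1) ∣ f i - 1) :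
    coeff n (∏ i ∈ t, f i) = coeff n (∏ i ∈ s, f i) := by
  rw [← prod_sdiff hst, mul_comm]
  exact coeff_mul_eq_of_X_pow_dvd_sub_one _ (X_pow_dvd_prod_sub_one hf)

lemma coeff_infProd (f : ℕ → R⟦X⟧) (n : ℕ) :
    coeff n (infProd f) = coeff n (∏ i ∈ Icc 1 n, f i) :=
  coeff_mk _ _

variable {f g : ℕ → R⟦X⟧}

lemma coeff_infProd_of_le (hf : ∀ i, X ^ i ∣ f i - 1) {n N : ℕ} (h : n ≤ N) :
    coeff n (infProd f) = coeff n (∏ i ∈ Icc 1 N, f i) := by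
  rw [coeff_infProd, coeff_prod_eq_of_subset (Icc_subset_Icc_right h)]
  intro i hi
  have : n < i := by simp only [mem_sdiff, mem_Icc] at hi; omega
  exact (pow_dvd_pow X this).trans (hf i)

lemma infProd_one : infProd (1 : ℕ → R⟦X⟧) = 1 := by
  ext n
  simp [infProd]

lemma infProd_mul (hf : ∀ i, X ^ i ∣ f i - 1) (hg : ∀ i, X ^ i ∣ g i - 1) :
    infProd f * infProd g = infProd (f * g) := by
  ext n
  rw [coeff_infProd (f * g)]
  simp only [Pi.mul_apply, prod_mul_distrib, coeff_mul]
  refine sum_congr rfl fun p hp => ?_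
  have hsum : p.1 + p.2 = n := mem_antidiagonal.mp hp
  rw [coeff_infProd_of_le hf (by omega : p.1 ≤ n), coeff_infProd_of_le hg (by omega : p.2 ≤ n)]

lemma infProd_pow (hf : ∀ i, X ^ i ∣ f i - 1) (a : ℕ) : infProd f ^ a = infProd (f ^ a) := by
  induction a with
  | zero => rw [pow_zero, pow_zero, infProd_one]
  | succ a ih =>
    have hfa (i : ℕ) : X ^ i ∣ (f ^ a) i - 1 := (hf i).trans (sub_one_dvd_pow_sub_one (f i) a)
    rw [pow_succ, ih, infProd_mul hfa hf, pow_succ]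

lemma hasProd_infProd [TopologicalSpace R] (hf : ∀ i, X ^ i ∣ f i - 1) :
    HasProd (fun i => f (i + 1)) (infProd f) := by
  rw [HasProd, WithPiTopology.tendsto_iff_coeff_tendsto]
  refine fun n => tendsto_atTop_of_eventually_const (i₀ := range n) fun s hs => ?_
  have hsub : Icc 1 n ⊆ s.map (addRightEmbedding 1) := fun i hi => by
    simp only [mem_Icc] at hi
    exact mem_map.mpr ⟨i - 1, hs (mem_range.mpr (by omega)), by
      simp only [addRightEmbedding_apply]; omega⟩
  have hmap : ∏ i ∈ s, f (i + 1) = ∏ i ∈ s.map (addRightEmbedding 1), f i :=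
    (prod_map s (addRightEmbedding 1) f).symm
  rw [coeff_infProd, hmap, coeff_prod_eq_of_subset hsub]
  intro i hi
  obtain ⟨him, hni⟩ := mem_sdiff.mp hi
  obtain ⟨j, -, rfl⟩ := mem_map.mp him
  have : n < j + 1 := by simp only [mem_Icc, addRightEmbedding_apply] at hni; omega
  exact (pow_dvd_pow X this).trans (hf (j + 1))

lemma infProd_substPow_mul {A B : R⟦X⟧} (hA : constantCoeff A = 1) (hB : constantCoeff B = 1) :
    infProd (fun k => substPow k (A * B)) =
      infProd (fun k => substPow k A) * infProd (fun k => substPow k B) := by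
  rw [infProd_mul (X_pow_dvd_substPow_sub_one · hA) (X_pow_dvd_substPow_sub_one · hB)]
  simp only [substPow_mul, Pi.mul_def]

lemma infProd_substPow_pow {A : R⟦X⟧} (hA : constantCoeff A = 1) (a : ℕ) :
    infProd (fun k => substPow k (A ^ a)) = infProd (fun k => substPow k A) ^ a := by
  rw [infProd_pow (X_pow_dvd_substPow_sub_one · hA)]
  simp only [substPow_pow, Pi.pow_def]

end infProd

section zp

variable {R : Type*} [CommRing R]

lemma zp_natCast (B : R⟦X⟧) (a : ℕ) : zp B a = B ^ a := by
  simp [zp]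

lemma zp_neg_natCast (B : R⟦X⟧) (a : ℕ) : zp B (-a) = invOfUnit B 1 ^ a := by
  simp [zp]

end zp

lemma constantCoeff_geomZ : constantCoeff geomZ = 1 := by
  simp [geomZ]

lemma geomZ_mul_one_sub_X : geomZ * (1 - X) = 1 :=
  mk_one_mul_one_sub_eq_one ℤ

lemma invOfUnit_geomZ : invOfUnit geomZ 1 = 1 - X :=
  left_inv_eq_right_inv (invOfUnit_mul _ _ (by simp [constantCoeff_geomZ])) geomZ_mul_one_sub_X

lemma one_add_tsum_X_pow_eq_substPow_geomZ (k : ℕ) :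
    1 + ∑' j, (X : ℤ⟦X⟧) ^ ((k + 1) * (j + 1)) = substPow (k + 1) geomZ := by
  have h0 : constantCoeff (X ^ (k + 1) : ℤ⟦X⟧) = 0 := by simp
  have hinv : (1 - X ^ (k + 1)) * substPow (k + 1) geomZ = 1 := by
    rw [← substPow_one_sub_X k.succ_ne_zero, ← substPow_mul, mul_comm, geomZ_mul_one_sub_X,
      substPow_one]
  -- both sides are inverses of `1 - X ^ (k + 1)`
  refine Eq.trans ?_ (left_inv_eq_right_inv
    (WithPiTopology.tsum_pow_mul_one_sub_of_constantCoeff_eq_zero h0) hinv)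
  simp only [pow_mul]
  rw [(WithPiTopology.summable_pow_of_constantCoeff_eq_zero h0).tsum_eq_zero_add, pow_zero]

lemma partGen_eq_genFun : partGen = Nat.Partition.genFun (1 : ℕ → ℕ → ℤ) := by
  ext n
  simp [partGen, Finsupp.prod]

lemma hasProd_substPow_geomZ : HasProd (fun k => substPow (k + 1) geomZ) partGen := by
  rw [partGen_eq_genFun]
  simpa only [Pi.one_apply, smul_eq_C_mul, map_one, one_mul,
    one_add_tsum_X_pow_eq_substPow_geomZ] using
    Nat.Partition.hasProd_genFun (1 : ℕ → ℕ → ℤ)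

lemma partGen_eq_infProd : partGen = infProd fun k => substPow k geomZ :=
  hasProd_substPow_geomZ.unique <|
    hasProd_infProd (X_pow_dvd_substPow_sub_one · constantCoeff_geomZ)

lemma infProd_substPow_one_sub_X_mul_partGen :
    (infProd fun k => substPow k (1 - X : ℤ⟦X⟧)) * partGen = 1 := by
  rw [partGen_eq_infProd, ← infProd_substPow_mul (by simp) constantCoeff_geomZ, mul_comm,
    geomZ_mul_one_sub_X]
  simp only [substPow_one]
  exact infProd_one

/-- The unique decomposition of the partition generating function has all exponents `1`:
`1 + ∑ p(n)tⁿ = ∏_{k≥1}(1-t^k)^{-1}`; hence for any `m ∈ ℤ` the power structure over `ℤ`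
(usual exponentiation of units of `ℤ⟦t⟧`) gives `(1 + ∑ p(n)tⁿ)^m = ∏_{k≥1}(1-t^k)^{-m}`,
and for `m = -1` Euler's identity `∏_{k≥1}(1-t^k) · (1 + ∑ p(n)tⁿ) = 1`. -/
theorem stmt15 :
    (partGen = infProd fun k => substPow k geomZ) ∧
    (∀ u : (PowerSeries ℤ)ˣ, (u : PowerSeries ℤ) = partGen → ∀ m : ℤ,
      ((u ^ m : (PowerSeries ℤ)ˣ) : PowerSeries ℤ) =
        infProd fun k => substPow k (zp geomZ m)) ∧
    (infProd fun k => substPow k (1 - PowerSeries.X : PowerSeries ℤ)) * partGen = 1 := by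
  refine ⟨partGen_eq_infProd, fun u hu m => ?_, infProd_substPow_one_sub_X_mul_partGen⟩
  obtain ⟨a, rfl | rfl⟩ := m.eq_nat_or_neg
  · rw [zp_natCast, infProd_substPow_pow constantCoeff_geomZ, zpow_natCast,
      Units.val_pow_eq_pow_val, hu, partGen_eq_infProd]
  · have hinv : ((u⁻¹ : ℤ⟦X⟧ˣ) : ℤ⟦X⟧) = infProd fun k => substPow k (1 - X) :=
      Units.inv_eq_of_mul_eq_one_left (hu ▸ infProd_substPow_one_sub_X_mul_partGen)
    rw [zp_neg_natCast, invOfUnit_geomZ, infProd_substPow_pow (by simp), zpow_neg, zpow_natCast,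
      ← inv_pow, Units.val_pow_eq_pow_val, hinv]
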